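/- Let $I$ be a compact interval and $\mathcal{F} = (f_x)_{x\in[0,1]}$ an admissible family that contains only finitely many distinct functions. Then there exists a uniquely determined $\mathbf{A}_\mathcal{F}$-invariant mean $K_\mathcal{F} : \mathcal{P}(I) \to I$. -/

import Mathlib

open MeasureTheory Set Filter Topology

noncomputable section

/-- The topological support of a Borel measure on `ℝ`. -/
def msupp (mu : Measure ℝ) : Set ℝ := {x | ∀ ε > 0, 0 < mu (Metric.ball x ε)}

/-- Infimum of the support. -/
def suppInf (mu : Measure ℝ) : ℝ := sInf (msupp mu)

/-- Supremum of the support. -/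
def suppSup (mu : Measure ℝ) : ℝ := sSup (msupp mu)

/-- `γ(P) = [inf supp P, sup supp P]`. -/
def gammaSet (mu : Measure ℝ) : Set ℝ := Icc (suppInf mu) (suppSup mu)

/-- `|γ(P)|`, the diameter of the support. -/
def gammaLen (mu : Measure ℝ) : ℝ := suppSup mu - suppInf mu

/-- `P ∈ 𝒫(I)`: a compactly supported Borel probability measure concentrated on `I`. -/
def IsCSP (I : Set ℝ) (mu : Measure ℝ) : Prop :=
  IsProbabilityMeasure mu ∧ mu Iᶜ = 0 ∧ IsCompact (closure (msupp mu))

/-- `f ∈ CM(I)`: continuous and strictly monotone on `I`. -/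
def CM (f : ℝ → ℝ) (I : Set ℝ) : Prop :=
  ContinuousOn f I ∧ (StrictMonoOn f I ∨ StrictAntiOn f I)

/-- The integral quasiarithmetic mean `𝒜_f(P) = f⁻¹(∫ f dP)` (inverse taken on `I`). -/
def QAM (f : ℝ → ℝ) (I : Set ℝ) (mu : Measure ℝ) : ℝ :=
  Function.invFunOn f I (∫ t, f t ∂mu)

/-- The Lebesgue σ-algebra on `ℝ` (completion of the Borel σ-algebra w.r.t. Lebesgue measure). -/
def Leb : MeasurableSpace ℝ where
  MeasurableSet' s := NullMeasurableSet s (volume : Measure ℝ)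
  measurableSet_empty := MeasurableSet.empty.nullMeasurableSet
  measurableSet_compl := fun _ hs => hs.compl
  measurableSet_iUnion := fun _ hf => NullMeasurableSet.iUnion hf

/-- An admissible family `(f_x)_{x∈[0,1]}`: each `f_x` continuous and strictly monotone on `I`,
and `(t,x) ↦ f_x(t)` measurable w.r.t. the product of the Borel σ-algebra and the
Lebesgue σ-algebra. -/
def Admissible (F : ℝ → ℝ → ℝ) (I : Set ℝ) : Prop :=
  (∀ x ∈ Icc (0:ℝ) 1, CM (F x) I) ∧
  Measurable[(inferInstance : MeasurableSpace ℝ).prod Leb] (fun p : ℝ × ℝ => F p.2 p.1)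

/-- `𝐀_𝓕(P)`: the distribution of `x ↦ 𝒜_{f_x}(P)` under Lebesgue measure on `[0,1]`. -/
def AF (F : ℝ → ℝ → ℝ) (I : Set ℝ) (mu : Measure ℝ) : Measure ℝ :=
  Measure.map (fun x => QAM (F x) I mu) ((volume : Measure ℝ).restrict (Icc 0 1))

/-- Iterates of `𝐀_𝓕`. -/
def AFiter (F : ℝ → ℝ → ℝ) (I : Set ℝ) (n : ℕ) (mu : Measure ℝ) : Measure ℝ :=
  (AF F I)^[n] mu

/-- A mean on `𝒫(I)`: `M(P) ∈ γ(P)`. -/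
def IsMean (I : Set ℝ) (M : Measure ℝ → ℝ) : Prop :=
  ∀ mu : Measure ℝ, IsCSP I mu → M mu ∈ gammaSet mu

/-- `M` is `𝐀_𝓕`-invariant: `M ∘ 𝐀_𝓕 = M` on `𝒫(I)`. -/
def IsInvariantMean (F : ℝ → ℝ → ℝ) (I : Set ℝ) (M : Measure ℝ → ℝ) : Prop :=
  ∀ mu : Measure ℝ, IsCSP I mu → M (AF F I mu) = M mu

/-- The lower invariant mean `𝓛_𝓕`. -/
def LF (F : ℝ → ℝ → ℝ) (I : Set ℝ) (mu : Measure ℝ) : ℝ :=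
  ⨆ n, suppInf (AFiter F I n mu)

/-- The upper invariant mean `𝓤_𝓕`. -/
def UF (F : ℝ → ℝ → ℝ) (I : Set ℝ) (mu : Measure ℝ) : ℝ :=
  ⨅ n, suppSup (AFiter F I n mu)

/-- Variance of a measure on `ℝ`. -/
def Var (mu : Measure ℝ) : ℝ := (∫ x, x ^ 2 ∂mu) - (∫ x, x ∂mu) ^ 2

/-- The two-point measure `θ·δ_x + (1-θ)·δ_y`. -/
def twoPt (x y θ : ℝ) : Measure ℝ :=
  ENNReal.ofReal θ • Measure.dirac x + ENNReal.ofReal (1 - θ) • Measure.dirac y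

/-!
Since `𝓕` takes only finitely many values `f`, `𝐀_𝓕(P)` is the discrete measure with mass
`|{x ∈ [0,1] : f_x = f}|` at `𝒜_f(P)`. Discarding the null fibres, `𝐀_𝓕` therefore acts on the
finite vector `u` of atoms by `u ↦ (𝒜_f(∑ w_g δ_{u_g}))_f`, a continuous self-map of a cube
`[a,b]^n`. A quasiarithmetic mean of a measure whose support is not a point lies strictly inside
the support interval, so this map strictly decreases the spread `max u - min u` unless it vanishes;
by compactness the spread tends to `0`. Hence the intervals `γ(𝐀_𝓕ⁿ P)` shrink to a point. Every
invariant mean lies in all of them, and the lower invariant mean `𝓛_𝓕` is such a mean.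
-/

open scoped ENNReal

lemma exists_measure_ball_eq_zero_of_notMem_msupp {mu : Measure ℝ} {x : ℝ} (h : x ∉ msupp mu) :
    ∃ ε > 0, mu (Metric.ball x ε) = 0 := by
  simpa [msupp] using h

lemma isClosed_msupp (mu : Measure ℝ) : IsClosed (msupp mu) := by
  rw [← isOpen_compl_iff, Metric.isOpen_iff]
  intro x hx
  obtain ⟨ε, hε, h0⟩ := exists_measure_ball_eq_zero_of_notMem_msupp hx
  refine ⟨ε / 2, half_pos hε, fun y hy hymem => (hymem (ε / 2) (half_pos hε)).ne' ?_⟩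
  refine measure_mono_null (fun z hz => ?_) h0
  rw [Metric.mem_ball] at *
  linarith [dist_triangle z y x]

lemma measure_compl_msupp (mu : Measure ℝ) : mu (msupp mu)ᶜ = 0 := by
  refine measure_null_of_locally_null _ fun x hx => ?_
  obtain ⟨ε, hε, h0⟩ := exists_measure_ball_eq_zero_of_notMem_msupp hx
  exact ⟨Metric.ball x ε, mem_nhdsWithin_of_mem_nhds (Metric.ball_mem_nhds x hε), h0⟩

lemma msupp_subset_of_measure_compl_eq_zero {mu : Measure ℝ} {C : Set ℝ} (hC : IsClosed C)
    (h : mu Cᶜ = 0) : msupp mu ⊆ C := by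
  intro x hx
  by_contra hxC
  obtain ⟨ε, hε, hsub⟩ := Metric.isOpen_iff.1 hC.isOpen_compl x hxC
  exact (hx ε hε).ne' (measure_mono_null hsub h)

lemma msupp_nonempty (mu : Measure ℝ) [IsProbabilityMeasure mu] : (msupp mu).Nonempty := by
  rw [nonempty_iff_ne_empty]
  intro h
  simpa [h] using measure_compl_msupp mu

namespace IsCSP

variable {a b : ℝ} {mu : Measure ℝ}

lemma msupp_subset (h : IsCSP (Icc a b) mu) : msupp mu ⊆ Icc a b :=
  msupp_subset_of_measure_compl_eq_zero isClosed_Icc h.2.1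

lemma bddBelow_msupp (h : IsCSP (Icc a b) mu) : BddBelow (msupp mu) :=
  bddBelow_Icc.mono h.msupp_subset

lemma bddAbove_msupp (h : IsCSP (Icc a b) mu) : BddAbove (msupp mu) :=
  bddAbove_Icc.mono h.msupp_subset

lemma suppInf_mem (h : IsCSP (Icc a b) mu) : suppInf mu ∈ msupp mu :=
  haveI := h.1
  (isClosed_msupp mu).csInf_mem (msupp_nonempty mu) h.bddBelow_msupp

lemma suppSup_mem (h : IsCSP (Icc a b) mu) : suppSup mu ∈ msupp mu :=
  haveI := h.1
  (isClosed_msupp mu).csSup_mem (msupp_nonempty mu) h.bddAbove_msupp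

lemma suppInf_le_suppSup (h : IsCSP (Icc a b) mu) : suppInf mu ≤ suppSup mu :=
  csInf_le_csSup ⟨_, h.suppInf_mem⟩ h.bddBelow_msupp h.bddAbove_msupp

lemma gammaSet_subset (h : IsCSP (Icc a b) mu) : gammaSet mu ⊆ Icc a b :=
  Icc_subset_Icc (h.msupp_subset h.suppInf_mem).1 (h.msupp_subset h.suppSup_mem).2

lemma ae_mem_gammaSet (h : IsCSP (Icc a b) mu) : ∀ᵐ x ∂mu, x ∈ gammaSet mu := by
  refine measure_mono_null (compl_subset_compl.2 fun x hx => ?_) (measure_compl_msupp mu)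
  exact ⟨csInf_le h.bddBelow_msupp hx, le_csSup h.bddAbove_msupp hx⟩

end IsCSP

section QuasiArithmeticMean

variable {mu : Measure ℝ} {f : ℝ → ℝ} {α β : ℝ}

lemma integrable_of_ae_mem_Icc [IsFiniteMeasure mu] (hf : ContinuousOn f (Icc α β))
    (hae : ∀ᵐ x ∂mu, x ∈ Icc α β) : Integrable f mu := by
  simpa [IntegrableOn, Measure.restrict_eq_self_of_ae_mem hae] using
    hf.integrableOn_compact (μ := mu) isCompact_Icc

lemma integral_mem_image_Icc_of_monotoneOn [IsProbabilityMeasure mu] (hαβ : α ≤ β)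
    (hf : ContinuousOn f (Icc α β)) (hmono : MonotoneOn f (Icc α β))
    (hae : ∀ᵐ x ∂mu, x ∈ Icc α β) : ∫ x, f x ∂mu ∈ f '' Icc α β := by
  refine intermediate_value_Icc hαβ hf (convex_Icc _ _ |>.integral_mem isClosed_Icc ?_
    (integrable_of_ae_mem_Icc hf hae))
  filter_upwards [hae] with x hx
  exact ⟨hmono ⟨le_rfl, hαβ⟩ hx hx.1, hmono hx ⟨hαβ, le_rfl⟩ hx.2⟩

lemma integral_lt_of_ae_le [IsProbabilityMeasure mu] {c : ℝ} (hint : Integrable f mu)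
    (hle : ∀ᵐ x ∂mu, f x ≤ c) (hlt : mu {x | f x < c} ≠ 0) : ∫ x, f x ∂mu < c := by
  have hpos : 0 < ∫ x, c - f x ∂mu := by
    refine (integral_pos_iff_support_of_nonneg_ae (f := fun x => c - f x) ?_
      ((integrable_const c).sub hint)).2 ?_
    · filter_upwards [hle] with x hx using sub_nonneg.2 hx
    · exact pos_iff_ne_zero.2 fun h0 => hlt <| measure_mono_null
        (fun x (hx : f x < c) => sub_ne_zero.2 hx.ne') h0
  rw [integral_sub (integrable_const c) hint, integral_const, probReal_univ, one_smul] at hpos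
  linarith

/-- Each endpoint of the support carries mass near it, so the integral stays strictly away from
the values of `f` at the endpoints. -/
lemma integral_mem_image_Ioo_of_strictMonoOn [IsProbabilityMeasure mu] (hαβ : α < β)
    (hα : α ∈ msupp mu) (hβ : β ∈ msupp mu) (hf : ContinuousOn f (Icc α β))
    (hmono : StrictMonoOn f (Icc α β)) (hae : ∀ᵐ x ∂mu, x ∈ Icc α β) :
    ∫ x, f x ∂mu ∈ f '' Ioo α β := by
  have hint := integrable_of_ae_mem_Icc hf hae
  have hα' : α ∈ Icc α β := ⟨le_rfl, hαβ.le⟩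
  have hβ' : β ∈ Icc α β := ⟨hαβ.le, le_rfl⟩
  have hball {z : ℝ} (hz : z ∈ msupp mu) : mu (Metric.ball z (β - α) ∩ Icc α β) ≠ 0 := by
    have hIcc : mu (Icc α β)ᶜ = 0 := hae
    rw [measure_inter_conull hIcc]
    exact (hz _ (sub_pos.2 hαβ)).ne'
  have hlower : f α < ∫ x, f x ∂mu := by
    have := integral_lt_of_ae_le (f := fun x => -f x) hint.neg
      (by filter_upwards [hae] with x hx using neg_le_neg (hmono.monotoneOn hα' hx hx.1))
      (c := -f α) fun h0 => hball hβ <| measure_mono_null (fun x hx => neg_lt_neg <| hmono hα'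
        hx.2 (by linarith [(abs_lt.1 (Metric.mem_ball.1 hx.1)).1])) h0
    rw [integral_neg] at this
    linarith
  have hupper : ∫ x, f x ∂mu < f β :=
    integral_lt_of_ae_le hint
      (by filter_upwards [hae] with x hx using hmono.monotoneOn hx hβ' hx.2)
      fun h0 => hball hα <| measure_mono_null (fun x hx => hmono hx.2 hβ'
        (by linarith [(abs_lt.1 (Metric.mem_ball.1 hx.1)).2])) h0
  exact intermediate_value_Ioo hαβ.le hf ⟨hlower, hupper⟩

lemma integral_mem_image_of_neg {s : Set ℝ} (h : ∫ x, -f x ∂mu ∈ (fun x => -f x) '' s) :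
    ∫ x, f x ∂mu ∈ f '' s := by
  obtain ⟨c, hc, hfc⟩ := h
  exact ⟨c, hc, neg_inj.1 (hfc.trans (integral_neg f))⟩

variable {a b : ℝ}

lemma CM.integral_mem_image_gammaSet (hf : CM f (Icc a b)) (hmu : IsCSP (Icc a b) mu) :
    ∫ x, f x ∂mu ∈ f '' gammaSet mu := by
  have := hmu.1
  have hcont := hf.1.mono hmu.gammaSet_subset
  rcases hf.2 with hmono | hanti
  · exact integral_mem_image_Icc_of_monotoneOn hmu.suppInf_le_suppSup hcont
      (hmono.monotoneOn.mono hmu.gammaSet_subset) hmu.ae_mem_gammaSet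
  · exact integral_mem_image_of_neg <| integral_mem_image_Icc_of_monotoneOn
      hmu.suppInf_le_suppSup hcont.neg (hanti.antitoneOn.mono hmu.gammaSet_subset).neg
      hmu.ae_mem_gammaSet

lemma CM.integral_mem_image_Ioo (hf : CM f (Icc a b)) (hmu : IsCSP (Icc a b) mu)
    (hlt : suppInf mu < suppSup mu) :
    ∫ x, f x ∂mu ∈ f '' Ioo (suppInf mu) (suppSup mu) := by
  have := hmu.1
  have hcont := hf.1.mono hmu.gammaSet_subset
  rcases hf.2 with hmono | hanti
  · exact integral_mem_image_Ioo_of_strictMonoOn hlt hmu.suppInf_mem hmu.suppSup_mem hcont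
      (hmono.mono hmu.gammaSet_subset) hmu.ae_mem_gammaSet
  · exact integral_mem_image_of_neg <| integral_mem_image_Ioo_of_strictMonoOn hlt
      hmu.suppInf_mem hmu.suppSup_mem hcont.neg (hanti.mono hmu.gammaSet_subset).neg
      hmu.ae_mem_gammaSet

lemma CM.injOn (hf : CM f (Icc a b)) : InjOn f (Icc a b) :=
  hf.2.elim StrictMonoOn.injOn StrictAntiOn.injOn

lemma QAM_mem_of_integral_mem_image {I s : Set ℝ} (hinj : InjOn f I) (hs : s ⊆ I)
    (h : ∫ x, f x ∂mu ∈ f '' s) : QAM f I mu ∈ s := by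
  obtain ⟨c, hc, hfc⟩ := h
  rw [QAM, ← hfc, hinj.leftInvOn_invFunOn (hs hc)]
  exact hc

lemma QAM_mem_gammaSet (hf : CM f (Icc a b)) (hmu : IsCSP (Icc a b) mu) :
    QAM f (Icc a b) mu ∈ gammaSet mu :=
  QAM_mem_of_integral_mem_image hf.injOn hmu.gammaSet_subset
    (hf.integral_mem_image_gammaSet hmu)

lemma QAM_mem_Ioo (hf : CM f (Icc a b)) (hmu : IsCSP (Icc a b) mu)
    (hlt : suppInf mu < suppSup mu) : QAM f (Icc a b) mu ∈ Ioo (suppInf mu) (suppSup mu) :=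
  QAM_mem_of_integral_mem_image hf.injOn (Ioo_subset_Icc_self.trans hmu.gammaSet_subset)
    (hf.integral_mem_image_Ioo hmu hlt)

end QuasiArithmeticMean

lemma continuousOn_invFunOn_image {X Y : Type*} [TopologicalSpace X] [Nonempty X]
    [TopologicalSpace Y] [T2Space Y] {f : X → Y} {s : Set X} (hs : IsCompact s)
    (hf : ContinuousOn f s) (hinj : InjOn f s) : ContinuousOn (Function.invFunOn f s) (f '' s) := by
  rw [continuousOn_iff_isClosed]
  intro C hC
  refine ⟨f '' (C ∩ s), ((hs.inter_left hC).image_of_continuousOn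
    (hf.mono inter_subset_right)).isClosed, ?_⟩
  ext y
  constructor
  · rintro ⟨hyC, x, hx, rfl⟩
    rw [mem_preimage, hinj.leftInvOn_invFunOn hx] at hyC
    exact ⟨⟨x, ⟨hyC, hx⟩, rfl⟩, x, hx, rfl⟩
  · rintro ⟨⟨x, ⟨hxC, hx⟩, rfl⟩, -⟩
    exact ⟨by rwa [mem_preimage, hinj.leftInvOn_invFunOn hx], x, hx, rfl⟩

section DiracSum

variable {ι : Type*} [Fintype ι] {w : ι → ℝ≥0∞} {u : ι → ℝ}

def diracSum (w : ι → ℝ≥0∞) (u : ι → ℝ) : Measure ℝ := ∑ i, w i • Measure.dirac (u i)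

lemma diracSum_apply {s : Set ℝ} (hs : MeasurableSet s) :
    diracSum w u s = ∑ i, w i * s.indicator 1 (u i) := by
  simp [diracSum, Measure.dirac_apply' _ hs]

lemma msupp_diracSum (hw : ∀ i, w i ≠ 0) : msupp (diracSum w u) = range u := by
  have hclosed : IsClosed (range u) := (finite_range u).isClosed
  ext x
  constructor
  · intro hx
    by_contra hxu
    obtain ⟨ε, hε, hball⟩ := Metric.isOpen_iff.1 hclosed.isOpen_compl x hxu
    refine (hx ε hε).ne' ?_
    rw [diracSum_apply measurableSet_ball]
    refine Finset.sum_eq_zero fun i _ => ?_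
    rw [indicator_of_notMem fun hi => hball hi (mem_range_self i), mul_zero]
  · rintro ⟨i, rfl⟩ ε hε
    rw [diracSum_apply measurableSet_ball]
    refine lt_of_lt_of_le (pos_iff_ne_zero.2 (hw i)) ?_
    calc w i = w i * (Metric.ball (u i) ε).indicator 1 (u i) := by
          simp [Metric.mem_ball_self hε]
      _ ≤ _ := Finset.single_le_sum (f := fun j => w j * (Metric.ball (u i) ε).indicator 1 (u j))
          (fun _ _ => zero_le) (Finset.mem_univ i)

lemma suppInf_diracSum (hw : ∀ i, w i ≠ 0) : suppInf (diracSum w u) = ⨅ i, u i := by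
  rw [suppInf, msupp_diracSum hw]
  rfl

lemma suppSup_diracSum (hw : ∀ i, w i ≠ 0) : suppSup (diracSum w u) = ⨆ i, u i := by
  rw [suppSup, msupp_diracSum hw]
  rfl

lemma isCSP_diracSum {a b : ℝ} (hw1 : ∑ i, w i = 1) (hw : ∀ i, w i ≠ 0)
    (hu : ∀ i, u i ∈ Icc a b) : IsCSP (Icc a b) (diracSum w u) := by
  refine ⟨⟨by simpa [diracSum_apply MeasurableSet.univ] using hw1⟩, ?_, ?_⟩
  · rw [diracSum_apply measurableSet_Icc.compl]
    exact Finset.sum_eq_zero fun i _ => by simp [hu i]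
  · rw [msupp_diracSum hw, (finite_range u).isClosed.closure_eq]
    exact (finite_range u).isCompact

lemma integral_diracSum (hw : ∀ i, w i ≠ ∞) (g : ℝ → ℝ) :
    ∫ x, g x ∂(diracSum w u) = ∑ i, (w i).toReal * g (u i) := by
  have hint (i : ι) : Integrable g (w i • Measure.dirac (u i)) :=
    (integrable_dirac (by simp)).smul_measure (hw i)
  rw [diracSum, integral_finsetSum_measure fun i _ => hint i]
  simp [integral_smul_measure]

end DiracSum

theorem tendsto_iterate_of_lyapunov {X : Type*} [TopologicalSpace X] [FirstCountableTopology X]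
    {K : Set X} (hK : IsCompact K) {Φ : X → X} (hΦK : MapsTo Φ K K) (hΦ : ContinuousOn Φ K)
    {D : X → ℝ} (hD : Continuous D) (hD0 : ∀ x ∈ K, 0 ≤ D x)
    (hle : ∀ x ∈ K, D (Φ x) ≤ D x) (hlt : ∀ x ∈ K, 0 < D x → D (Φ x) < D x)
    {x : X} (hx : x ∈ K) : Tendsto (fun n => D (Φ^[n] x)) atTop (𝓝 0) := by
  have horbit (n : ℕ) : Φ^[n] x ∈ K := hΦK.iterate n hx
  have hanti : Antitone fun n => D (Φ^[n] x) := antitone_nat_of_succ_le fun n => by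
    rw [Function.iterate_succ_apply']
    exact hle _ (horbit n)
  have hbdd : BddBelow (range fun n => D (Φ^[n] x)) :=
    ⟨0, by rintro _ ⟨n, rfl⟩; exact hD0 _ (horbit n)⟩
  set L := ⨅ n, D (Φ^[n] x)
  have hL : Tendsto (fun n => D (Φ^[n] x)) atTop (𝓝 L) := tendsto_atTop_ciInf hanti hbdd
  obtain ⟨y, hyK, φ, hφ, hy⟩ := hK.tendsto_subseq horbit
  have hDy : D y = L :=
    tendsto_nhds_unique (l := atTop) (f := fun n => D (Φ^[φ n] x)) ((hD.tendsto y).comp hy)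
      (hL.comp hφ.tendsto_atTop)
  have hDΦy : D (Φ y) = L := by
    refine tendsto_nhds_unique (l := atTop) (f := fun n => D (Φ (Φ^[φ n] x)))
      ((hD.tendsto _).comp ((hΦ y hyK).tendsto.comp ?_)) ?_
    · exact tendsto_nhdsWithin_iff.2 ⟨hy, Eventually.of_forall fun n => horbit _⟩
    · refine (hL.comp ((tendsto_add_atTop_nat 1).comp hφ.tendsto_atTop)).congr fun n => ?_
      simp [Function.iterate_succ_apply']
  have hL0 : 0 ≤ L := hDy ▸ hD0 y hyK
  rcases hL0.eq_or_lt with h0 | hpos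
  · rwa [h0]
  · exact ((hlt y hyK (hDy ▸ hpos)).ne (hDΦy.trans hDy.symm)).elim

section QAMStep

variable {ι : Type*} [Fintype ι] {w : ι → ℝ≥0∞} {f : ι → ℝ → ℝ} {a b : ℝ} {u : ι → ℝ}

def qamStep (I : Set ℝ) (f : ι → ℝ → ℝ) (w : ι → ℝ≥0∞) (u : ι → ℝ) : ι → ℝ :=
  fun i => QAM (f i) I (diracSum w u)

def spread (u : ι → ℝ) : ℝ := (⨆ i, u i) - ⨅ i, u i

lemma spread_nonneg [Nonempty ι] (u : ι → ℝ) : 0 ≤ spread u :=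
  sub_nonneg.2 (ciInf_le_ciSup (Finite.bddBelow_range u) (Finite.bddAbove_range u))

lemma continuous_spread : Continuous (spread : (ι → ℝ) → ℝ) := by
  cases isEmpty_or_nonempty ι
  · exact continuous_of_const fun u v => by rw [Subsingleton.elim u v]
  · have hsup : Continuous fun u : ι → ℝ => ⨆ i, u i := by
      simpa only [← Finset.sup'_univ_eq_ciSup] using
        Continuous.finset_sup'_apply Finset.univ_nonempty fun i _ => continuous_apply i
    have hinf : Continuous fun u : ι → ℝ => ⨅ i, u i := by
      simpa only [← Finset.inf'_univ_eq_ciInf] using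
        Continuous.finset_inf'_apply Finset.univ_nonempty fun i _ => continuous_apply i
    exact hsup.sub hinf

variable (hf : ∀ i, CM (f i) (Icc a b)) (hw1 : ∑ i, w i = 1) (hw : ∀ i, w i ≠ 0)
include hf hw1 hw

lemma qamStep_mem_Icc (hu : u ∈ univ.pi fun _ => Icc a b) (i : ι) :
    qamStep (Icc a b) f w u i ∈ Icc (⨅ i, u i) (⨆ i, u i) := by
  have := QAM_mem_gammaSet (hf i) (isCSP_diracSum hw1 hw (mem_univ_pi.1 hu))
  rwa [gammaSet, suppInf_diracSum hw, suppSup_diracSum hw] at this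

lemma qamStep_mem_Ioo (hu : u ∈ univ.pi fun _ => Icc a b) (hlt : 0 < spread u) (i : ι) :
    qamStep (Icc a b) f w u i ∈ Ioo (⨅ i, u i) (⨆ i, u i) := by
  have hμ := isCSP_diracSum hw1 hw (mem_univ_pi.1 hu)
  rw [spread, sub_pos, ← suppInf_diracSum hw, ← suppSup_diracSum hw] at hlt
  have := QAM_mem_Ioo (hf i) hμ hlt
  rwa [suppInf_diracSum hw, suppSup_diracSum hw] at this

lemma mapsTo_qamStep :
    MapsTo (qamStep (Icc a b) f w) (univ.pi fun _ => Icc a b) (univ.pi fun _ => Icc a b) :=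
  fun _ hu => mem_univ_pi.2 fun i =>
    (isCSP_diracSum hw1 hw (mem_univ_pi.1 hu)).gammaSet_subset
      (QAM_mem_gammaSet (hf i) (isCSP_diracSum hw1 hw (mem_univ_pi.1 hu)))

lemma spread_qamStep_le [Nonempty ι] (hu : u ∈ univ.pi fun _ => Icc a b) :
    spread (qamStep (Icc a b) f w u) ≤ spread u := by
  have h := qamStep_mem_Icc hf hw1 hw hu
  exact sub_le_sub (ciSup_le fun i => (h i).2) (le_ciInf fun i => (h i).1)

lemma spread_qamStep_lt [Nonempty ι] (hu : u ∈ univ.pi fun _ => Icc a b) (hlt : 0 < spread u) :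
    spread (qamStep (Icc a b) f w u) < spread u := by
  have h := qamStep_mem_Ioo hf hw1 hw hu hlt
  obtain ⟨i, hi⟩ := exists_eq_ciSup_of_finite (f := qamStep (Icc a b) f w u)
  obtain ⟨j, hj⟩ := exists_eq_ciInf_of_finite (f := qamStep (Icc a b) f w u)
  rw [spread, spread, ← hi, ← hj]
  linarith [(h i).2, (h j).1]

lemma continuousOn_qamStep :
    ContinuousOn (qamStep (Icc a b) f w) (univ.pi fun _ => Icc a b) := by
  have hw_top (i : ι) : w i ≠ ∞ :=
    ne_top_of_le_ne_top ENNReal.one_ne_top (hw1 ▸ Finset.single_le_sum (fun _ _ => zero_le)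
      (Finset.mem_univ i))
  refine continuousOn_pi.2 fun i => ?_
  have hint : ContinuousOn (fun u : ι → ℝ => ∑ j, (w j).toReal * f i (u j))
      (univ.pi fun _ => Icc a b) :=
    continuousOn_finsetSum _ fun j _ => continuousOn_const.mul <|
      (hf i).1.comp (continuous_apply j).continuousOn fun u hu => mem_univ_pi.1 hu j
  have hmaps : MapsTo (fun u : ι → ℝ => ∑ j, (w j).toReal * f i (u j))
      (univ.pi fun _ => Icc a b) (f i '' Icc a b) := fun u hu => by
    have hμ := isCSP_diracSum hw1 hw (mem_univ_pi.1 hu)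
    simpa only [integral_diracSum hw_top] using
      image_mono hμ.gammaSet_subset ((hf i).integral_mem_image_gammaSet hμ)
  refine ((continuousOn_invFunOn_image isCompact_Icc (hf i).1 (hf i).injOn).comp hint
    hmaps).congr fun u _ => ?_
  simp [qamStep, QAM, integral_diracSum hw_top]

theorem tendsto_spread_iterate_qamStep [Nonempty ι] (hu : u ∈ univ.pi fun _ => Icc a b) :
    Tendsto (fun n => spread ((qamStep (Icc a b) f w)^[n] u)) atTop (𝓝 0) :=
  tendsto_iterate_of_lyapunov (isCompact_univ_pi fun _ => isCompact_Icc)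
    (mapsTo_qamStep hf hw1 hw) (continuousOn_qamStep hf hw1 hw) continuous_spread
    (fun u _ => spread_nonneg u) (fun _ hu => spread_qamStep_le hf hw1 hw hu)
    (fun _ hu => spread_qamStep_lt hf hw1 hw hu) hu

end QAMStep

section FiniteValued

variable {α β γ : Type*} [MeasurableSpace α] [MeasurableSpace γ] {μ : Measure α}

/-- Finitely many functions are told apart by finitely many evaluations. -/
lemma nullMeasurableSet_preimage_singleton_of_ae_mem_finset [MeasurableSingletonClass γ]
    {G : α → β → γ} {T : Finset (β → γ)} (hGT : ∀ᵐ x ∂μ, G x ∈ T)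
    (hG : ∀ t, NullMeasurable (fun x => G x t) μ) (g : β → γ) :
    NullMeasurableSet (G ⁻¹' {g}) μ := by
  classical
  have hsep (h : ↥(T.erase g)) : ∃ t, (h : β → γ) t ≠ g t :=
    Function.ne_iff.1 (Finset.mem_erase.1 h.2).1
  choose t ht using hsep
  have heq : G ⁻¹' {g} =ᵐ[μ] ⋂ h : ↥(T.erase g), (fun x => G x (t h)) ⁻¹' {g (t h)} := by
    filter_upwards [hGT] with x hx
    refine propext ⟨fun (hxg : G x = g) => mem_iInter.2 fun h => show G x (t h) = g (t h) by
      rw [hxg], fun hx' => ?_⟩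
    by_contra hxg
    exact ht ⟨G x, Finset.mem_erase.2 ⟨hxg, hx⟩⟩ (mem_iInter.1 hx' ⟨G x, _⟩)
  exact (NullMeasurableSet.iInter fun h => hG _ (measurableSet_singleton _)).congr heq.symm

variable {G : α → β} {T : Finset β}

lemma sum_measure_preimage_singleton (hGT : ∀ᵐ x ∂μ, G x ∈ T)
    (hG : ∀ t ∈ T, NullMeasurableSet (G ⁻¹' {t}) μ) :
    ∑ t ∈ T, μ (G ⁻¹' {t}) = μ univ := by
  rw [← measure_biUnion_finset₀ (fun _ _ _ _ hst => (pairwise_disjoint_fiber G hst).aedisjoint) hG]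
  refine measure_congr ?_
  filter_upwards [hGT] with x hx
  change (x ∈ ⋃ t ∈ T, G ⁻¹' {t}) = (x ∈ univ)
  simp [hx]

lemma map_eq_sum_smul_dirac (hGT : ∀ᵐ x ∂μ, G x ∈ T)
    (hG : ∀ t ∈ T, NullMeasurableSet (G ⁻¹' {t}) μ) (u : β → γ) :
    μ.map (fun x => u (G x)) = ∑ t ∈ T, μ (G ⁻¹' {t}) • Measure.dirac (u t) := by
  classical
  have hmeas : AEMeasurable (fun x => u (G x)) μ := by
    have hcover : ∀ᵐ x ∂μ, x ∈ ⋃ t : ↥T, G ⁻¹' {(t : β)} := by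
      filter_upwards [hGT] with x hx
      exact mem_iUnion.2 ⟨⟨G x, hx⟩, rfl⟩
    rw [← Measure.restrict_eq_self_of_ae_mem hcover, aemeasurable_iUnion_iff]
    intro t
    refine (aemeasurable_const (b := u t)).congr ?_
    filter_upwards [ae_restrict_mem₀ (hG t t.2)] with x hx
    simp_all
  have hpre (s : Set γ) :
      (fun x => u (G x)) ⁻¹' s =ᵐ[μ] ⋃ t ∈ T.filter (u · ∈ s), G ⁻¹' {t} := by
    filter_upwards [hGT] with x hx
    change (u (G x) ∈ s) = (x ∈ ⋃ t ∈ T.filter (u · ∈ s), G ⁻¹' {t})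
    simp [hx]
  ext s hs
  rw [Measure.map_apply₀ hmeas hs.nullMeasurableSet, measure_congr (hpre s),
    measure_biUnion_finset₀ (fun _ _ _ _ hst => (pairwise_disjoint_fiber G hst).aedisjoint)
      fun t ht => hG t (Finset.mem_filter.1 ht).1,
    Finset.sum_filter, Measure.coe_finsetSum, Finset.sum_apply]
  refine Finset.sum_congr rfl fun t _ => ?_
  by_cases hts : u t ∈ s <;> simp [Measure.dirac_apply' _ hs, hts]

end FiniteValued

section InvariantMean

variable {F : ℝ → ℝ → ℝ} {a b : ℝ} {mu : Measure ℝ}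
  (hAF : ∀ mu, IsCSP (Icc a b) mu →
    IsCSP (Icc a b) (AF F (Icc a b) mu) ∧ gammaSet (AF F (Icc a b) mu) ⊆ gammaSet mu)
include hAF

lemma isCSP_AFiter (hmu : IsCSP (Icc a b) mu) (n : ℕ) :
    IsCSP (Icc a b) (AFiter F (Icc a b) n mu) := by
  induction n with
  | zero => exact hmu
  | succ n ih =>
    rw [AFiter, Function.iterate_succ_apply']
    exact (hAF _ ih).1

lemma antitone_gammaSet_AFiter (hmu : IsCSP (Icc a b) mu) :
    Antitone fun n => gammaSet (AFiter F (Icc a b) n mu) :=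
  antitone_nat_of_succ_le fun n => by
    simpa only [AFiter, Function.iterate_succ_apply'] using
      (hAF _ (isCSP_AFiter hAF hmu n)).2

lemma monotone_suppInf_AFiter (hmu : IsCSP (Icc a b) mu) :
    Monotone fun n => suppInf (AFiter F (Icc a b) n mu) := fun _ n hmn =>
  ((Icc_subset_Icc_iff (isCSP_AFiter hAF hmu n).suppInf_le_suppSup).1
    (antitone_gammaSet_AFiter hAF hmu hmn)).1

lemma LF_mem_gammaSet (hmu : IsCSP (Icc a b) mu) : LF F (Icc a b) mu ∈ gammaSet mu := by
  have h (n : ℕ) : suppInf (AFiter F (Icc a b) n mu) ∈ gammaSet mu :=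
    antitone_gammaSet_AFiter hAF hmu (Nat.zero_le n)
      ⟨le_rfl, (isCSP_AFiter hAF hmu n).suppInf_le_suppSup⟩
  exact ⟨le_ciSup ⟨suppSup mu, by rintro _ ⟨n, rfl⟩; exact (h n).2⟩ 0, ciSup_le fun n => (h n).2⟩

lemma isInvariantMean_LF : IsInvariantMean F (Icc a b) (LF F (Icc a b)) := fun _ hmu => by
  simp only [LF, AFiter, ← Function.iterate_succ_apply]
  exact (monotone_suppInf_AFiter hAF hmu).ciSup_comp_tendsto_atTop_of_linearOrder
    (tendsto_add_atTop_nat 1)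

lemma IsInvariantMean.apply_AFiter {M : Measure ℝ → ℝ} (hM : IsInvariantMean F (Icc a b) M)
    (hmu : IsCSP (Icc a b) mu) (n : ℕ) : M (AFiter F (Icc a b) n mu) = M mu := by
  induction n with
  | zero => rfl
  | succ n ih =>
    rw [AFiter, Function.iterate_succ_apply']
    exact (hM _ (isCSP_AFiter hAF hmu n)).trans ih

/-- Invariant means are squeezed into the shrinking intervals `γ(𝐀_𝓕ⁿ P)`. -/
lemma IsInvariantMean.eq_of_tendsto_gammaLen {M N : Measure ℝ → ℝ}
    (hM : IsMean (Icc a b) M) (hMinv : IsInvariantMean F (Icc a b) M)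
    (hN : IsMean (Icc a b) N) (hNinv : IsInvariantMean F (Icc a b) N)
    (hmu : IsCSP (Icc a b) mu)
    (hlen : Tendsto (fun n => gammaLen (AFiter F (Icc a b) n mu)) atTop (𝓝 0)) :
    M mu = N mu := by
  have hle (n : ℕ) : |M mu - N mu| ≤ gammaLen (AFiter F (Icc a b) n mu) := by
    have hMn := hM _ (isCSP_AFiter hAF hmu n)
    have hNn := hN _ (isCSP_AFiter hAF hmu n)
    rw [hMinv.apply_AFiter hAF hmu] at hMn
    rw [hNinv.apply_AFiter hAF hmu] at hNn
    rw [gammaLen, abs_sub_le_iff]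
    constructor <;> linarith [hMn.1, hMn.2, hNn.1, hNn.2]
  exact sub_eq_zero.1 (abs_nonpos_iff.1 (ge_of_tendsto' hlen hle))

end InvariantMean

section FiniteFamily

variable {F : ℝ → ℝ → ℝ} {T : Finset (ℝ → ℝ)}

def fiberWeight (F : ℝ → ℝ → ℝ) (f : ℝ → ℝ) : ℝ≥0∞ :=
  volume.restrict (Icc (0 : ℝ) 1) (F ⁻¹' {f})

def chargedFunctions (F : ℝ → ℝ → ℝ) (T : Finset (ℝ → ℝ)) : Finset (ℝ → ℝ) :=
  T.filter fun f => fiberWeight F f ≠ 0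

lemma Admissible.nullMeasurable_apply {I : Set ℝ} (hF : Admissible F I) (t : ℝ) :
    NullMeasurable (fun x => F x t) (volume.restrict (Icc (0 : ℝ) 1)) := fun _ hs =>
  NullMeasurableSet.mono
    (hF.2.comp (@measurable_prodMk_left ℝ ℝ _ Leb t) hs : NullMeasurableSet _ volume)
    Measure.restrict_le_self

lemma ae_mem_chargedFunctions (hT : ∀ x ∈ Icc (0 : ℝ) 1, F x ∈ T) :
    ∀ᵐ x ∂(volume.restrict (Icc (0 : ℝ) 1)), F x ∈ chargedFunctions F T := by
  have hzero (f : ℝ → ℝ) :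
      ∀ᵐ x ∂(volume.restrict (Icc (0 : ℝ) 1)), fiberWeight F f = 0 → F x ≠ f := by
    by_cases h0 : fiberWeight F f = 0
    · filter_upwards [measure_eq_zero_iff_ae_notMem.1 h0] with x hx _ using hx
    · exact Eventually.of_forall fun _ h => absurd h h0
  filter_upwards [ae_restrict_of_forall_mem measurableSet_Icc hT,
    (Filter.eventually_all_finset T).2 fun f _ => hzero f] with x hxT hx
  exact Finset.mem_filter.2 ⟨hxT, fun h0 => hx (F x) hxT h0 rfl⟩

lemma fiberWeight_ne_zero (f : chargedFunctions F T) : fiberWeight F f ≠ 0 :=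
  (Finset.mem_filter.1 f.2).2

lemma CM_of_mem_chargedFunctions {I : Set ℝ} (hF : Admissible F I) (f : chargedFunctions F T) :
    CM f I := by
  have hpos := fiberWeight_ne_zero f
  rw [fiberWeight, Measure.restrict_apply' measurableSet_Icc] at hpos
  obtain ⟨x, hxf, hx⟩ := nonempty_of_measure_ne_zero hpos
  rw [← mem_singleton_iff.1 hxf]
  exact hF.1 x hx

variable {I : Set ℝ} (hF : Admissible F I) (hT : ∀ x ∈ Icc (0 : ℝ) 1, F x ∈ T)
include hF hT

lemma nullMeasurableSet_fiber (f : ℝ → ℝ) :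
    NullMeasurableSet (F ⁻¹' {f}) (volume.restrict (Icc (0 : ℝ) 1)) :=
  nullMeasurableSet_preimage_singleton_of_ae_mem_finset
    (ae_restrict_of_forall_mem measurableSet_Icc hT) hF.nullMeasurable_apply f

lemma AF_eq_diracSum (mu : Measure ℝ) :
    AF F I mu = diracSum (fun f : chargedFunctions F T => fiberWeight F f) (QAM · I mu) := by
  rw [AF, map_eq_sum_smul_dirac (ae_mem_chargedFunctions hT)
    (fun f _ => nullMeasurableSet_fiber hF hT f) (QAM · I mu), diracSum, ← Finset.sum_coe_sort]
  rfl

lemma sum_fiberWeight : ∑ f : chargedFunctions F T, fiberWeight F f = 1 := by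
  rw [Finset.sum_coe_sort (chargedFunctions F T) (fiberWeight F)]
  exact (sum_measure_preimage_singleton (ae_mem_chargedFunctions hT)
    fun f _ => nullMeasurableSet_fiber hF hT f).trans (by simp)

lemma nonempty_chargedFunctions : Nonempty (chargedFunctions F T) :=
  Finset.univ_nonempty_iff.1 <| Finset.nonempty_of_sum_ne_zero <| by
    rw [sum_fiberWeight hF hT]
    exact one_ne_zero

end FiniteFamily

section FiniteFamilyOnInterval

variable {F : ℝ → ℝ → ℝ} {T : Finset (ℝ → ℝ)} {a b : ℝ} {mu : Measure ℝ}
  (hF : Admissible F (Icc a b)) (hT : ∀ x ∈ Icc (0 : ℝ) 1, F x ∈ T)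
include hF hT

lemma AF_shrinks_gammaSet (hmu : IsCSP (Icc a b) mu) :
    IsCSP (Icc a b) (AF F (Icc a b) mu) ∧ gammaSet (AF F (Icc a b) mu) ⊆ gammaSet mu := by
  have := nonempty_chargedFunctions hF hT
  have hv (f : chargedFunctions F T) : QAM f (Icc a b) mu ∈ gammaSet mu :=
    QAM_mem_gammaSet (CM_of_mem_chargedFunctions hF f) hmu
  rw [AF_eq_diracSum hF hT]
  refine ⟨isCSP_diracSum (sum_fiberWeight hF hT) fiberWeight_ne_zero
    fun f => hmu.gammaSet_subset (hv f), ?_⟩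
  rw [gammaSet, suppInf_diracSum fiberWeight_ne_zero, suppSup_diracSum fiberWeight_ne_zero]
  exact Icc_subset_Icc (le_ciInf fun f => (hv f).1) (ciSup_le fun f => (hv f).2)

lemma AFiter_succ_eq_diracSum (mu : Measure ℝ) (n : ℕ) :
    AFiter F (Icc a b) (n + 1) mu =
      diracSum (fun f : chargedFunctions F T => fiberWeight F f)
        ((qamStep (Icc a b) Subtype.val fun f => fiberWeight F f)^[n] (QAM · (Icc a b) mu)) := by
  induction n with
  | zero => exact AF_eq_diracSum hF hT mu
  | succ n ih =>
    rw [AFiter, Function.iterate_succ_apply', ← AFiter, ih, AF_eq_diracSum hF hT,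
      Function.iterate_succ_apply']
    rfl

theorem tendsto_gammaLen_AFiter (hmu : IsCSP (Icc a b) mu) :
    Tendsto (fun n => gammaLen (AFiter F (Icc a b) n mu)) atTop (𝓝 0) := by
  have := nonempty_chargedFunctions hF hT
  refine (tendsto_add_atTop_iff_nat 1).1 <| (tendsto_spread_iterate_qamStep
    (fun f => CM_of_mem_chargedFunctions hF f) (sum_fiberWeight hF hT) fiberWeight_ne_zero
    (mem_univ_pi.2 fun f => hmu.gammaSet_subset
      (QAM_mem_gammaSet (CM_of_mem_chargedFunctions hF f) hmu))).congr fun n => ?_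
  rw [AFiter_succ_eq_diracSum hF hT, gammaLen, suppInf_diracSum fiberWeight_ne_zero,
    suppSup_diracSum fiberWeight_ne_zero, spread]

end FiniteFamilyOnInterval

theorem stmt18_general (a b : ℝ) (F : ℝ → ℝ → ℝ)
    (hF : Admissible F (Icc a b))
    (hfin : (F '' Icc (0:ℝ) 1).Finite) :
    ∃ Kmean : Measure ℝ → ℝ,
      (IsMean (Icc a b) Kmean ∧ IsInvariantMean F (Icc a b) Kmean) ∧
      ∀ K' : Measure ℝ → ℝ, IsMean (Icc a b) K' ∧ IsInvariantMean F (Icc a b) K' →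
        ∀ mu : Measure ℝ, IsCSP (Icc a b) mu → K' mu = Kmean mu := by
  have hT : ∀ x ∈ Icc (0 : ℝ) 1, F x ∈ hfin.toFinset := fun x hx =>
    hfin.mem_toFinset.2 (mem_image_of_mem F hx)
  have hAF := fun mu => AF_shrinks_gammaSet (mu := mu) hF hT
  have hmean : IsMean (Icc a b) (LF F (Icc a b)) := fun mu hmu => LF_mem_gammaSet hAF hmu
  refine ⟨LF F (Icc a b), ⟨hmean, isInvariantMean_LF hAF⟩, fun K' ⟨hK', hK'inv⟩ mu hmu => ?_⟩
  exact hK'inv.eq_of_tendsto_gammaLen hAF hK' hmean (isInvariantMean_LF hAF) hmu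
    (tendsto_gammaLen_AFiter hF hT hmu)

theorem stmt18 (a b : ℝ) (hab : a ≤ b) (F : ℝ → ℝ → ℝ)
    (hF : Admissible F (Icc a b))
    (hfin : (F '' Icc (0:ℝ) 1).Finite) :
    ∃ Kmean : Measure ℝ → ℝ,
      (IsMean (Icc a b) Kmean ∧ IsInvariantMean F (Icc a b) Kmean) ∧
      ∀ K' : Measure ℝ → ℝ, IsMean (Icc a b) K' ∧ IsInvariantMean F (Icc a b) K' →
        ∀ mu : Measure ℝ, IsCSP (Icc a b) mu → K' mu = Kmean mu :=
  stmt18_general a b F hF hfin
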